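/- Let r ≥ 4 be even and A a primitive 4r-th root of unity, [n] = (A^{2n}−A^{−2n})/(A²−A^{−2}). Then for every integer m with 1 ≤ m ≤ r−1: ∑_{n even, 2 ≤ n ≤ r−2} [n]·[nm] = (−r/(A²−A^{−2})²) · (δ_{m,1} − δ_{m,r−1}). -/

import Mathlib

/-! With `r = 2s` and `ζ = A⁴`, a primitive `r`-th root of unity, the summand for `n = 2k` is
`(y - y⁻¹)(yᵐ - y⁻ᵐ) / (A² - A⁻²)² = (c (m+1) - c (m-1)) / (A² - A⁻²)²` where `y = ζᵏ` and
`c a = yᵃ + y⁻ᵃ`. Summed over `1 ≤ k < s`, `c a` is a geometric sum; because `ζˢ = -1` it equals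
`r · [r ∣ a] - 1 - (-1)ᵃ`. The sign terms cancel between `a = m + 1` and `a = m - 1`, and for
`1 ≤ m ≤ r - 1` the divisibilities `r ∣ m + 1`, `r ∣ m - 1` single out `m = r - 1` and `m = 1`. -/

noncomputable def qint (A : ℂ) (n : ℕ) : ℂ :=
  (A ^ (2 * n) - A⁻¹ ^ (2 * n)) / (A ^ 2 - A⁻¹ ^ 2)

section PairSums

variable {K : Type*} [Field K]

theorem sum_Ico_pow_add_inv_pow_of_pow_sq_eq_one {x : K} {s : ℕ} (hs : 0 < s) (hx : x ≠ 1)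
    (hxs : (x ^ s) ^ 2 = 1) :
    ∑ k ∈ Finset.Ico 1 s, (x ^ k + x⁻¹ ^ k) = -(1 + x ^ s) := by
  have hx0 : x ≠ 0 := by
    rintro rfl
    simp [zero_pow hs.ne'] at hxs
  have hinv : x⁻¹ ^ s = x ^ s := by
    rw [inv_pow]
    exact inv_eq_of_mul_eq_one_right (by rw [← sq, hxs])
  have hx' : x⁻¹ ≠ 1 := inv_ne_one.mpr hx
  rw [Finset.sum_add_distrib, geom_sum_Ico hx hs, geom_sum_Ico hx' hs, hinv,
    div_add_div _ _ (sub_ne_zero.mpr hx) (sub_ne_zero.mpr hx'),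
    div_eq_iff (mul_ne_zero (sub_ne_zero.mpr hx) (sub_ne_zero.mpr hx'))]
  linear_combination (x ^ s - 1) * mul_inv_cancel₀ hx0

theorem IsPrimitiveRoot.sum_Ico_pow_add_inv_pow {ζ : K} {s : ℕ}
    (hζ : IsPrimitiveRoot ζ (2 * s)) (hs : 0 < s) (a : ℕ) :
    ∑ k ∈ Finset.Ico 1 s, ((ζ ^ k) ^ a + (ζ ^ k)⁻¹ ^ a) =
      (if 2 * s ∣ a then ((2 * s : ℕ) : K) else 0) - 1 - (-1) ^ a := by
  have hswap : ∀ k, (ζ ^ k) ^ a + (ζ ^ k)⁻¹ ^ a = (ζ ^ a) ^ k + (ζ ^ a)⁻¹ ^ k := fun k => by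
    simp only [← inv_pow, pow_right_comm ζ k a, pow_right_comm ζ⁻¹ k a]
  simp only [hswap]
  split_ifs with ha
  · have hone : ζ ^ a = 1 := (hζ.pow_eq_one_iff_dvd a).mpr ha
    have ha2 : Even a := even_iff_two_dvd.mpr ((dvd_mul_right 2 s).trans ha)
    simp only [hone, one_pow, inv_one, Finset.sum_const, Nat.card_Ico, nsmul_eq_mul,
      ha2.neg_one_pow]
    push_cast [Nat.cast_sub hs]
    ring
  · have hζs : ζ ^ s = -1 := (hζ.pow (by omega) (mul_comm 2 s)).eq_neg_one_of_two_right
    have hpow : (ζ ^ a) ^ s = (-1) ^ a := by rw [pow_right_comm, hζs]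
    rw [sum_Ico_pow_add_inv_pow_of_pow_sq_eq_one hs (mt (hζ.pow_eq_one_iff_dvd a).mp ha)
      (by rw [hpow, ← pow_mul, mul_comm, pow_mul, neg_one_sq, one_pow]), hpow]
    ring

theorem sub_inv_mul_pow_sub_inv_pow {y : K} (hy : y ≠ 0) {m : ℕ} (hm : 1 ≤ m) :
    (y - y⁻¹) * (y ^ m - y⁻¹ ^ m) =
      y ^ (m + 1) + y⁻¹ ^ (m + 1) - (y ^ (m - 1) + y⁻¹ ^ (m - 1)) := by
  obtain ⟨t, rfl⟩ : ∃ t, m = t + 1 := ⟨m - 1, by omega⟩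
  simp only [Nat.add_sub_cancel]
  linear_combination (-(y ^ t) - y⁻¹ ^ t) * mul_inv_cancel₀ hy

end PairSums

theorem Nat.filter_even_Icc_one_two_mul_sub_one (s : ℕ) :
    (Finset.Icc 1 (2 * s - 1)).filter Even = (Finset.Ico 1 s).image (2 * ·) := by
  ext n
  simp only [Finset.mem_filter, Finset.mem_Icc, Finset.mem_image, Finset.mem_Ico]
  constructor
  · rintro ⟨hn, k, rfl⟩
    exact ⟨k, by omega, by omega⟩
  · rintro ⟨k, hk, rfl⟩
    exact ⟨by omega, even_two_mul k⟩

theorem qint_two_mul (A : ℂ) (n : ℕ) :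
    qint A (2 * n) = ((A ^ 4) ^ n - ((A ^ 4) ^ n)⁻¹) / (A ^ 2 - A⁻¹ ^ 2) := by
  simp only [qint, inv_pow, ← pow_mul]
  ring_nf

theorem qint_two_mul_mul_qint {A : ℂ} (hA : A ≠ 0) (k : ℕ) {m : ℕ} (hm : 1 ≤ m) :
    qint A (2 * k) * qint A (2 * k * m) =
      (((A ^ 4) ^ k) ^ (m + 1) + ((A ^ 4) ^ k)⁻¹ ^ (m + 1) -
        (((A ^ 4) ^ k) ^ (m - 1) + ((A ^ 4) ^ k)⁻¹ ^ (m - 1))) / (A ^ 2 - A⁻¹ ^ 2) ^ 2 := by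
  rw [mul_assoc, qint_two_mul, qint_two_mul, div_mul_div_comm, ← sq, pow_mul,
    ← inv_pow ((A ^ 4) ^ k) m, sub_inv_mul_pow_sub_inv_pow (by positivity) hm]

theorem stmt_7_general (r : ℕ) (hre : Even r) (A : ℂ)
    (hA : IsPrimitiveRoot A (4 * r)) (m : ℕ) (hm1 : 1 ≤ m) (hm2 : m ≤ r - 1) :
    ∑ n ∈ (Finset.Icc 1 (r - 1)).filter (fun n => Even n), qint A n * qint A (n * m) =
      (-(r : ℂ) / (A ^ 2 - A⁻¹ ^ 2) ^ 2) *
        ((if m = 1 then (1 : ℂ) else 0) - (if m = r - 1 then (1 : ℂ) else 0)) := by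
  obtain ⟨s, rfl⟩ := hre.two_dvd
  have hs : 0 < s := by omega
  have hζ : IsPrimitiveRoot (A ^ 4) (2 * s) := hA.pow (by omega) (by ring)
  rw [Nat.filter_even_Icc_one_two_mul_sub_one, Finset.sum_image (fun _ _ _ _ h => by omega)]
  simp only [qint_two_mul_mul_qint (hA.ne_zero (by omega)) _ hm1]
  rw [← Finset.sum_div, Finset.sum_sub_distrib, hζ.sum_Ico_pow_add_inv_pow hs,
    hζ.sum_Ico_pow_add_inv_pow hs, div_mul_eq_mul_div]
  congr 1
  have hsign : (-1 : ℂ) ^ (m + 1) = (-1) ^ (m - 1) := by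
    rw [show m + 1 = m - 1 + 2 by omega, pow_add, neg_one_sq, mul_one]
  have htop : 2 * s ∣ m + 1 ↔ m = 2 * s - 1 :=
    ⟨fun h => by have := Nat.eq_of_dvd_of_lt_two_mul (by omega) h (by omega); omega,
      fun h => ⟨1, by omega⟩⟩
  have hbot : 2 * s ∣ m - 1 ↔ m = 1 := by
    rw [Nat.dvd_iff_mod_eq_zero, Nat.mod_eq_of_lt (by omega)]
    omega
  rw [hsign]
  simp only [htop, hbot]
  split_ifs <;> ring

theorem stmt_7 (r : ℕ) (hr : 4 ≤ r) (hre : Even r) (A : ℂ)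
    (hA : IsPrimitiveRoot A (4 * r)) (m : ℕ) (hm1 : 1 ≤ m) (hm2 : m ≤ r - 1) :
    ∑ n ∈ (Finset.Icc 1 (r - 1)).filter (fun n => Even n), qint A n * qint A (n * m) =
      (-(r : ℂ) / (A ^ 2 - A⁻¹ ^ 2) ^ 2) *
        ((if m = 1 then (1 : ℂ) else 0) - (if m = r - 1 then (1 : ℂ) else 0)) :=
  stmt_7_general r hre A hA m hm1 hm2
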